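/- Fix δ ∈ (0,1/2], α > 0, and an integer m ≥ 1. Let Z_(1)^n, …, Z_(m)^n be m independent strings, each consisting of n i.i.d. Bernoulli(δ) bits, and for each i let G_i be a guessing function for the distribution of Z_(i)^n. Then lim_{n→∞} (1/n) log₂ E[ min_{i=1,…,m} G_i(Z_(i)^n)^α ] = α·H_{m/(α+m)}(δ). Equivalently, the decentralized guesswork exponent of m agents each observing a uniform secret string X^n through an independent binary symmetric channel with crossover probability δ equals α·H_{m/(α+m)}(δ). -/

import Mathlib

/-!
With `β = m / (α + m)` and `c = δ ^ β + (1 - δ) ^ β`, both bounds have exponent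
`(α + m) log c = α H_β(δ)`.

Upper bound: `(min_i G_i) ^ α ≤ ∏_i G_i ^ (α / m)`, so by independence the moment factors into
`m` single-agent moments, each bounded by Arikan's inequality
`E[G ^ ρ] ≤ (∑_x q(x) ^ (1 / (1 + ρ))) ^ (1 + ρ)`; for `n` Bernoulli bits and `ρ = α / m` the
right-hand side is `c ^ (n (α + m) / m)`.

Lower bound: restrict every agent to the strings of weight `k ≈ θ n`, where `θ = δ ^ β / c` is
the tilted parameter. These `C(n, k)` strings are equally likely and `G_i` is injective, so each
agent guesses at least half of them no earlier than `C(n, k) / 2`. Hence the moment is at least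
`(C(n, k) / 2) ^ (α + m) (δ ^ k (1 - δ) ^ (n - k)) ^ m`, and `log C(n, k) ≈ n h(θ)` turns its
exponent into `(α + m) h(θ) + m (θ log δ + (1 - θ) log (1 - δ))`, which equals `(α + m) log c`
for this `θ`.
-/

open Real Filter Finset

/-- Binary Rényi entropy of order `β` (base-2 logarithm). -/
noncomputable def Hb (β p : ℝ) : ℝ := (1 / (1 - β)) * Real.logb 2 (p ^ β + (1 - p) ^ β)

/-- Binary KL divergence `D(p‖q)` in bits (Lean's `logb 2 0 = 0` gives the `0·log 0 = 0` convention). -/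
noncomputable def Dkl (p q : ℝ) : ℝ :=
  p * Real.logb 2 (p / q) + (1 - p) * Real.logb 2 ((1 - p) / (1 - q))

/-- Binary Shannon entropy in bits. -/
noncomputable def binEnt (p : ℝ) : ℝ := -(p * Real.logb 2 p) - (1 - p) * Real.logb 2 (1 - p)

/-- `G` is a guessing function for the distribution `q` on the finite set `S`:
a bijection onto `{1, …, |S|}` ranking more likely elements first. -/
def IsGuessingFunction {S : Type*} [Fintype S] (q : S → ℝ) (G : S → ℕ) : Prop :=
  Function.Injective G ∧ (∀ x, G x ∈ Finset.Icc 1 (Fintype.card S)) ∧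
    ∀ x y, q y < q x → G x < G y

/-- Distribution of `n` i.i.d. Bernoulli(`p`) bits (`true` has probability `p`). -/
noncomputable def bernDist (p : ℝ) (n : ℕ) (x : Fin n → Bool) : ℝ :=
  ∏ i, if x i then p else 1 - p

def weight {n : ℕ} (x : Fin n → Bool) : ℕ := #{i | x i}

lemma bernDist_eq_pow_weight (p : ℝ) {n : ℕ} (x : Fin n → Bool) :
    bernDist p n x = p ^ weight x * (1 - p) ^ (n - weight x) := by
  rw [bernDist, prod_ite, prod_const, prod_const, weight]
  congr 2
  have hsplit := card_filter_add_card_filter_not (s := (univ : Finset (Fin n))) (p := (x · = true))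
  simp only [card_univ, Fintype.card_fin] at hsplit
  omega

lemma bernDist_pos {p : ℝ} (h0 : 0 < p) (h1 : p < 1) {n : ℕ} (x : Fin n → Bool) :
    0 < bernDist p n x :=
  prod_pos fun i _ => by split <;> linarith

lemma card_weight_eq (n k : ℕ) : #{x : Fin n → Bool | weight x = k} = n.choose k := by
  have hpowerset := card_powersetCard k (univ : Finset (Fin n))
  rw [card_univ, Fintype.card_fin] at hpowerset
  rw [← hpowerset]
  refine card_bij' (fun x _ => ({i | x i} : Finset (Fin n))) (fun s _ i => decide (i ∈ s))
    ?_ ?_ ?_ ?_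
  · intro x hx
    rw [mem_filter] at hx
    simpa [mem_powersetCard, weight] using hx.2
  · intro s hs
    rw [mem_powersetCard] at hs
    rw [mem_filter]
    simpa [weight] using hs.2
  · intro x _
    simp
  · intro s _
    ext i
    simp

lemma sum_bernDist_rpow {p : ℝ} (h0 : 0 ≤ p) (h1 : p ≤ 1) (n : ℕ) (β : ℝ) :
    ∑ x : Fin n → Bool, bernDist p n x ^ β = (p ^ β + (1 - p) ^ β) ^ n := by
  have hfactor (x : Fin n → Bool) :
      bernDist p n x ^ β = ∏ i, (if x i then p else 1 - p) ^ β :=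
    (Real.finsetProd_rpow _ _ (fun i _ => by split <;> linarith) β).symm
  calc ∑ x, bernDist p n x ^ β = ∏ _i : Fin n, ∑ b : Bool, (if b then p else 1 - p) ^ β := by
        rw [Fintype.prod_sum]; exact sum_congr rfl fun x _ => hfactor x
    _ = _ := by simp

def binomTerm (n k j : ℕ) : ℕ := n.choose j * k ^ j * (n - k) ^ (n - j)

lemma succ_mul_binomTerm_succ (n k j : ℕ) :
    (j + 1) * (n - k) * binomTerm n k (j + 1) = (n - j) * k * binomTerm n k j := by
  rcases lt_or_ge j n with hjn | hnj
  · have hpow : (n - k) ^ (n - j) = (n - k) ^ (n - (j + 1)) * (n - k) := by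
      rw [← pow_succ]; congr 1; omega
    calc (j + 1) * (n - k) * binomTerm n k (j + 1)
        = n.choose (j + 1) * (j + 1) * (k ^ (j + 1) * (n - k) ^ (n - (j + 1)) * (n - k)) := by
          rw [binomTerm]; ring
      _ = n.choose j * (n - j) * (k ^ (j + 1) * (n - k) ^ (n - (j + 1)) * (n - k)) := by
          rw [Nat.choose_succ_right_eq]
      _ = (n - j) * k * binomTerm n k j := by
          rw [binomTerm, hpow, pow_succ]; ring
  · simp [binomTerm, Nat.choose_eq_zero_of_lt (Nat.lt_succ_of_le hnj), Nat.sub_eq_zero_of_le hnj]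

/-- The binomial distribution with parameter `k / n` has its mode at `k`. -/
lemma binomTerm_le_binomTerm_self {n k : ℕ} (hk0 : 0 < k) (hkn : k < n) (j : ℕ) :
    binomTerm n k j ≤ binomTerm n k k := by
  rcases le_total j k with hjk | hkj
  · induction hjk using Nat.decreasingInduction with
    | self => exact le_rfl
    | of_succ i hik ih =>
      have hratio : (i + 1) * (n - k) ≤ (n - i) * k := by
        rw [mul_comm (n - i)]; exact Nat.mul_le_mul (by omega) (by omega)
      have hpos : 0 < (n - i) * k := Nat.mul_pos (by omega) hk0
      refine le_trans (Nat.le_of_mul_le_mul_left ?_ hpos) ih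
      rw [← succ_mul_binomTerm_succ]
      exact Nat.mul_le_mul_right _ hratio
  · induction j, hkj using Nat.le_induction with
    | base => exact le_rfl
    | succ i hki ih =>
      have hratio : (n - i) * k ≤ (i + 1) * (n - k) := by
        rw [mul_comm (i + 1)]; exact Nat.mul_le_mul (by omega) (by omega)
      have hpos : 0 < (i + 1) * (n - k) := Nat.mul_pos i.succ_pos (by omega)
      refine le_trans (Nat.le_of_mul_le_mul_left ?_ hpos) ih
      rw [succ_mul_binomTerm_succ]
      exact Nat.mul_le_mul_right _ hratio

lemma pow_self_le_succ_mul_binomTerm {n k : ℕ} (hk0 : 0 < k) (hkn : k < n) :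
    n ^ n ≤ (n + 1) * binomTerm n k k :=
  calc n ^ n = (k + (n - k)) ^ n := by rw [Nat.add_sub_cancel' hkn.le]
    _ = ∑ j ∈ range (n + 1), binomTerm n k j := by
        rw [add_pow]; exact sum_congr rfl fun j _ => by rw [binomTerm, Nat.cast_id]; ring
    _ ≤ ∑ _j ∈ range (n + 1), binomTerm n k k :=
        sum_le_sum fun j _ => binomTerm_le_binomTerm_self hk0 hkn j
    _ = (n + 1) * binomTerm n k k := by rw [sum_const, card_range, smul_eq_mul]

lemma logb_choose_ge {n k : ℕ} (hk0 : 0 < k) (hkn : k < n) :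
    n * binEnt (k / n) - logb 2 (n + 1) ≤ logb 2 (n.choose k) := by
  set p : ℝ := k / n
  have hn : (0 : ℝ) < n := by exact_mod_cast hk0.trans hkn
  have hnp : (n : ℝ) * p = k := by simp only [p]; field_simp
  have hnq : (n : ℝ) * (1 - p) = ((n - k : ℕ) : ℝ) := by
    rw [Nat.cast_sub hkn.le]; simp only [p]; field_simp
  have hp0 : 0 < p := by positivity
  have hp1 : 0 < 1 - p := sub_pos.mpr ((div_lt_one hn).mpr (by exact_mod_cast hkn))
  have hC : (0 : ℝ) < n.choose k := by exact_mod_cast Nat.choose_pos hkn.le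
  have hmode : 1 ≤ (n + 1) * n.choose k * (p ^ k * (1 - p) ^ (n - k)) := by
    refine le_of_mul_le_mul_left ?_ (by positivity : (0 : ℝ) < n ^ n)
    have hsplit : (n : ℝ) ^ n = n ^ k * n ^ (n - k) := by
      rw [← pow_add, Nat.add_sub_cancel' hkn.le]
    have hnat := pow_self_le_succ_mul_binomTerm hk0 hkn
    rw [binomTerm] at hnat
    calc (n : ℝ) ^ n * 1 ≤ (n + 1) * (n.choose k * (n * p) ^ k * (n * (1 - p)) ^ (n - k)) := by
          rw [hnp, hnq, mul_one]; exact_mod_cast hnat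
      _ = _ := by rw [hsplit, mul_pow, mul_pow]; ring
  have hlog := Real.logb_nonneg one_lt_two hmode
  rw [Real.logb_mul (by positivity) (by positivity), Real.logb_mul (by positivity) (by positivity),
    Real.logb_mul (by positivity) (by positivity), Real.logb_pow, Real.logb_pow] at hlog
  have hent : (n : ℝ) * binEnt p = -(k * logb 2 p) - ((n - k : ℕ) : ℝ) * logb 2 (1 - p) := by
    rw [← hnp, ← hnq, binEnt]; ring
  rw [hent]
  linarith

section Guessing

variable {S : Type*} [Fintype S] {q : S → ℝ} {G : S → ℕ}

lemma IsGuessingFunction.one_le (h : IsGuessingFunction q G) (x : S) : 1 ≤ G x :=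
  (mem_Icc.mp (h.2.1 x)).1

lemma IsGuessingFunction.le_card_filter_le (h : IsGuessingFunction q G) (x : S) :
    G x ≤ #{y | q x ≤ q y} := by
  have hlt : #{y | ¬ q x ≤ q y} ≤ #(Ioc (G x) (Fintype.card S)) :=
    card_le_card_of_injOn G (fun y hy => by
      have hy : q y < q x := by simpa using hy
      exact mem_Ioc.mpr ⟨h.2.2 x y hy, (mem_Icc.mp (h.2.1 y)).2⟩) h.1.injOn
  have hGx := (mem_Icc.mp (h.2.1 x)).2
  have hsplit := card_filter_add_card_filter_not (s := (univ : Finset S)) (p := (q x ≤ q ·))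
  rw [card_univ] at hsplit
  rw [Nat.card_Ioc] at hlt
  omega

lemma IsGuessingFunction.le_sum_rpow_div (h : IsGuessingFunction q G) (hq : ∀ x, 0 < q x)
    {β : ℝ} (hβ : 0 ≤ β) (x : S) : (G x : ℝ) ≤ (∑ y, q y ^ β) / q x ^ β := by
  calc (G x : ℝ) ≤ #{y | q x ≤ q y} := by exact_mod_cast h.le_card_filter_le x
    _ = ∑ y ∈ {y | q x ≤ q y}, (1 : ℝ) := by simp
    _ ≤ ∑ y ∈ {y | q x ≤ q y}, (q y / q x) ^ β :=
        sum_le_sum fun y hy => Real.one_le_rpow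
          ((one_le_div (hq x)).mpr (mem_filter.mp hy).2) hβ
    _ ≤ ∑ y, (q y / q x) ^ β :=
        sum_le_sum_of_subset_of_nonneg (subset_univ _) fun y _ _ => by
          have := hq y; have := hq x; positivity
    _ = (∑ y, q y ^ β) / q x ^ β := by
        rw [sum_div]; exact sum_congr rfl fun y _ => Real.div_rpow (hq y).le (hq x).le β

/-- Arikan's bound on the moments of a guessing function. -/
theorem IsGuessingFunction.sum_mul_rpow_le (h : IsGuessingFunction q G) (hq : ∀ x, 0 < q x)
    {ρ : ℝ} (hρ : 0 ≤ ρ) :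
    ∑ x, q x * (G x : ℝ) ^ ρ ≤ (∑ x, q x ^ (1 / (1 + ρ))) ^ (1 + ρ) := by
  set β := 1 / (1 + ρ)
  set c := ∑ x, q x ^ β
  have hβ : 0 ≤ β := by positivity
  have hc : 0 ≤ c := sum_nonneg fun x _ => Real.rpow_nonneg (hq x).le β
  have hterm (x : S) : q x * (G x : ℝ) ^ ρ ≤ c ^ ρ * q x ^ β := by
    have hqx := hq x
    calc q x * (G x : ℝ) ^ ρ ≤ q x * (c / q x ^ β) ^ ρ := by
          gcongr; exact h.le_sum_rpow_div hq hβ x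
      _ = c ^ ρ * q x ^ (1 - β * ρ) := by
          rw [Real.div_rpow hc (by positivity), ← Real.rpow_mul hqx.le, Real.rpow_sub hqx,
            Real.rpow_one]
          ring
      _ = c ^ ρ * q x ^ β := by
          congr 2; simp only [β]; field_simp; ring
  calc ∑ x, q x * (G x : ℝ) ^ ρ ≤ ∑ x, c ^ ρ * q x ^ β := sum_le_sum fun x _ => hterm x
    _ = c ^ (1 + ρ) := by
        rw [← mul_sum, Real.rpow_add' hc (by positivity), Real.rpow_one, mul_comm]

end Guessing

/-- `E[min_i G_i(Z_i) ^ α]` for independent `Z_i` with law `q`. -/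
noncomputable def minGuessMoment {S : Type*} [Fintype S] {m : ℕ} (q : S → ℝ) (G : Fin m → S → ℕ)
    (α : ℝ) : ℝ :=
  ∑ z : Fin m → S, (∏ i, q (z i)) * ((⨅ i, G i (z i) : ℕ) : ℝ) ^ α

lemma card_filter_lt_le_sub_one {S : Type*} {A : Finset S} {G : S → ℕ}
    (hinj : Function.Injective G) (hpos : ∀ x, 1 ≤ G x) (t : ℕ) : #{x ∈ A | G x < t} ≤ t - 1 := by
  simpa using card_le_card_of_injOn G (t := Ico 1 t)
    (fun x hx => mem_Ico.mpr ⟨hpos x, (mem_filter.mp hx).2⟩) hinj.injOn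

section MinGuessMoment

variable {S : Type*} [Fintype S] {m : ℕ} [NeZero m] {q : S → ℝ} {G : Fin m → S → ℕ} {α : ℝ}

lemma minGuessMoment_pos [Nonempty S] (hq : ∀ x, 0 < q x) (hpos : ∀ i x, 1 ≤ G i x) :
    0 < minGuessMoment q G α :=
  sum_pos (fun z _ => mul_pos (prod_pos fun _ _ => hq _) (Real.rpow_pos_of_pos
    (Nat.cast_pos.mpr (le_ciInf fun i => hpos i (z i))) α)) univ_nonempty

lemma iInf_rpow_le_prod_rpow (f : Fin m → ℕ) (hα : 0 ≤ α) :
    ((⨅ i, f i : ℕ) : ℝ) ^ α ≤ ∏ i, (f i : ℝ) ^ (α / m) := by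
  have hm : (m : ℝ) ≠ 0 := NeZero.ne _
  calc ((⨅ i, f i : ℕ) : ℝ) ^ α = ∏ _i : Fin m, ((⨅ i, f i : ℕ) : ℝ) ^ (α / m) := by
        rw [prod_const, card_univ, Fintype.card_fin, ← Real.rpow_natCast, ← Real.rpow_mul
          (Nat.cast_nonneg _), div_mul_cancel₀ _ hm]
    _ ≤ ∏ i, (f i : ℝ) ^ (α / m) :=
        Finset.prod_le_prod (fun _ _ => by positivity) fun i _ =>
          Real.rpow_le_rpow (Nat.cast_nonneg _)
            (Nat.cast_le.mpr (ciInf_le (OrderBot.bddBelow _) i)) (by positivity)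

theorem minGuessMoment_le (hq : ∀ x, 0 < q x) (hG : ∀ i, IsGuessingFunction q (G i))
    (hα : 0 ≤ α) :
    minGuessMoment q G α ≤ (∑ x, q x ^ ((m : ℝ) / (α + m))) ^ (α + m) := by
  have hm : (0 : ℝ) < m := Nat.cast_pos.mpr (NeZero.pos m)
  have hexp : 1 / (1 + α / m) = (m : ℝ) / (α + m) := by field_simp; ring
  set c := ∑ x, q x ^ ((m : ℝ) / (α + m))
  have hc : 0 ≤ c := sum_nonneg fun x _ => Real.rpow_nonneg (hq x).le _
  calc minGuessMoment q G α
      ≤ ∑ z : Fin m → S, ∏ i, q (z i) * (G i (z i) : ℝ) ^ (α / m) :=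
        sum_le_sum fun z _ => by
          rw [prod_mul_distrib]
          exact mul_le_mul_of_nonneg_left (iInf_rpow_le_prod_rpow _ hα)
            (prod_nonneg fun i _ => (hq _).le)
    _ = ∏ i, ∑ x, q x * (G i x : ℝ) ^ (α / m) := by rw [Fintype.prod_sum]
    _ ≤ ∏ _i : Fin m, c ^ (1 + α / m) :=
        Finset.prod_le_prod (fun i _ => sum_nonneg fun x _ => by have := hq x; positivity)
          fun i _ => by
            simpa only [hexp] using (hG i).sum_mul_rpow_le hq (ρ := α / m) (by positivity)
    _ = c ^ (α + m) := by
        rw [prod_const, card_univ, Fintype.card_fin, ← Real.rpow_natCast, ← Real.rpow_mul hc]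
        congr 1; field_simp; ring

/-- Each agent guesses at least half of `A` no earlier than `|A| / 2`. -/
theorem half_card_rpow_mul_pow_le_minGuessMoment (hq : ∀ x, 0 ≤ q x)
    (hinj : ∀ i, Function.Injective (G i)) (hpos : ∀ i x, 1 ≤ G i x) (hα : 0 ≤ α)
    (A : Finset S) {p : ℝ} (hp : 0 ≤ p) (hpA : ∀ x ∈ A, p ≤ q x) :
    ((#A : ℝ) / 2) ^ (α + m) * p ^ m ≤ minGuessMoment q G α := by
  set t := (#A + 1) / 2
  set B : Fin m → Finset S := fun i => {x ∈ A | t ≤ G i x}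
  have hB (i : Fin m) : t ≤ #(B i) := by
    have hsplit := card_filter_add_card_filter_not (s := A) (p := fun x => t ≤ G i x)
    have hsmall := card_filter_lt_le_sub_one (A := A) (hinj i) (hpos i) t
    simp only [not_le] at hsplit
    show t ≤ #{x ∈ A | t ≤ G i x}
    omega
  have hterm : ∀ z ∈ Fintype.piFinset B,
      p ^ m * (t : ℝ) ^ α ≤ (∏ i, q (z i)) * ((⨅ i, G i (z i) : ℕ) : ℝ) ^ α := by
    intro z hz
    have hzB (i : Fin m) := mem_filter.mp (Fintype.mem_piFinset.mp hz i)
    obtain ⟨i₀, hi₀⟩ := exists_eq_ciInf_of_finite (f := fun i => G i (z i))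
    gcongr
    · exact prod_nonneg fun i _ => hq _
    · calc p ^ m = ∏ _i : Fin m, p := by rw [prod_const, card_univ, Fintype.card_fin]
        _ ≤ ∏ i, q (z i) := Finset.prod_le_prod (fun _ _ => hp) fun i _ => hpA _ (hzB i).1
    · rw [← hi₀]; exact_mod_cast (hzB i₀).2
  have hAt : (#A : ℝ) / 2 ≤ t := by
    rw [div_le_iff₀ two_pos]; exact_mod_cast (by omega : #A ≤ t * 2)
  calc ((#A : ℝ) / 2) ^ (α + m) * p ^ m ≤ (t : ℝ) ^ (α + m) * p ^ m := by gcongr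
    _ = (t : ℝ) ^ m * (p ^ m * (t : ℝ) ^ α) := by
        have hm : (0 : ℝ) < m := Nat.cast_pos.mpr (NeZero.pos m)
        rw [Real.rpow_add' (Nat.cast_nonneg _) (by positivity), Real.rpow_natCast]; ring
    _ ≤ #(Fintype.piFinset B) * (p ^ m * (t : ℝ) ^ α) := by
        gcongr
        rw [Fintype.card_piFinset]
        calc (t : ℝ) ^ m = ∏ _i : Fin m, (t : ℝ) := by
              rw [prod_const, card_univ, Fintype.card_fin]
          _ ≤ ∏ i, (#(B i) : ℝ) := Finset.prod_le_prod (fun _ _ => by positivity) fun i _ => by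
              exact_mod_cast hB i
          _ = _ := by push_cast; rfl
    _ ≤ ∑ z ∈ Fintype.piFinset B, (∏ i, q (z i)) * ((⨅ i, G i (z i) : ℕ) : ℝ) ^ α := by
        simpa using card_nsmul_le_sum _ _ _ hterm
    _ ≤ minGuessMoment q G α :=
        sum_le_sum_of_subset_of_nonneg (subset_univ _) fun z _ _ =>
          mul_nonneg (prod_nonneg fun i _ => hq _) (by positivity)

end MinGuessMoment

lemma mul_Hb_eq {a b : ℝ} (ha : a ≠ 0) (hab : a + b ≠ 0) (p : ℝ) :
    a * Hb (b / (a + b)) p = (a + b) * logb 2 (p ^ (b / (a + b)) + (1 - p) ^ (b / (a + b))) := by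
  have hβ : 1 - b / (a + b) = a / (a + b) := by field_simp; ring
  rw [Hb, hβ]
  field_simp

lemma continuous_binEnt : Continuous binEnt := by
  have : binEnt = fun p => Real.binEntropy p / log 2 := by
    funext p
    simp only [binEnt, Real.binEntropy, logb, log_inv]
    ring
  rw [this]
  fun_prop

noncomputable def tiltedParam (δ β : ℝ) : ℝ := δ ^ β / (δ ^ β + (1 - δ) ^ β)

lemma tiltedParam_mem_Ioo {δ : ℝ} (h0 : 0 < δ) (h1 : δ < 1) (β : ℝ) :
    tiltedParam δ β ∈ Set.Ioo 0 1 := by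
  have := Real.rpow_pos_of_pos h0 β
  have := Real.rpow_pos_of_pos (sub_pos.mpr h1) β
  exact ⟨by unfold tiltedParam; positivity, (div_lt_one (by positivity)).mpr (by linarith)⟩

/-- `(1 / n) log₂` of `C(n, θ n) ^ (a + b) * (δ ^ (θ n) * (1 - δ) ^ (n - θ n)) ^ b`,
up to `o(1)`. -/
noncomputable def lowerExponent (a b δ θ : ℝ) : ℝ :=
  (a + b) * binEnt θ + b * (θ * logb 2 δ + (1 - θ) * logb 2 (1 - δ))

lemma continuous_lowerExponent (a b δ : ℝ) : Continuous (lowerExponent a b δ) := by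
  unfold lowerExponent
  have := continuous_binEnt
  fun_prop

lemma lowerExponent_tiltedParam {a b δ : ℝ} (hab : a + b ≠ 0) (h0 : 0 < δ) (h1 : δ < 1) :
    lowerExponent a b δ (tiltedParam δ (b / (a + b))) =
      (a + b) * logb 2 (δ ^ (b / (a + b)) + (1 - δ) ^ (b / (a + b))) := by
  set β := b / (a + b)
  set c := δ ^ β + (1 - δ) ^ β
  set θ := tiltedParam δ β
  have hδβ : 0 < δ ^ β := Real.rpow_pos_of_pos h0 β
  have hδβ' : 0 < (1 - δ) ^ β := Real.rpow_pos_of_pos (sub_pos.mpr h1) β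
  have hc : 0 < c := add_pos hδβ hδβ'
  have hθ : θ = δ ^ β / c := rfl
  have hθ' : 1 - θ = (1 - δ) ^ β / c := by
    rw [hθ, eq_div_iff hc.ne', sub_mul, div_mul_cancel₀ _ hc.ne']; ring
  have hβ : (a + b) * β = b := by simp only [β]; field_simp
  rw [lowerExponent, binEnt, hθ', Real.logb_div hδβ'.ne' hc.ne',
    Real.logb_rpow_eq_mul_logb_of_pos (sub_pos.mpr h1), hθ, Real.logb_div hδβ.ne' hc.ne',
    Real.logb_rpow_eq_mul_logb_of_pos h0, ← hθ, ← hθ']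
  linear_combination (-(θ * logb 2 δ + (1 - θ) * logb 2 (1 - δ))) * hβ

lemma tendsto_logb_succ_add_one_div :
    Tendsto (fun n : ℕ => (logb 2 (n + 1) + 1) / n) atTop (nhds 0) := by
  have hlog : Tendsto (fun n : ℕ => log ((n : ℝ) + 1) ^ 1 / (1 * ((n : ℝ) + 1) + -1)) atTop
      (nhds 0) :=
    (tendsto_pow_log_div_mul_add_atTop 1 (-1) 1 one_ne_zero).comp
      (tendsto_atTop_add_const_right _ 1 tendsto_natCast_atTop_atTop)
  have hsum := (hlog.div_const (log 2)).add (tendsto_one_div_atTop_nhds_zero_nat (𝕜 := ℝ))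
  rw [zero_div, add_zero] at hsum
  refine hsum.congr fun n => ?_
  simp only [logb, pow_one, one_mul, add_neg_cancel_right]
  ring

lemma eventually_floor_mul_pos_and_lt {θ : ℝ} (hθ : θ ∈ Set.Ioo 0 1) :
    ∀ᶠ n : ℕ in atTop, 0 < ⌊θ * n⌋₊ ∧ ⌊θ * n⌋₊ < n := by
  filter_upwards [(tendsto_natCast_atTop_atTop.const_mul_atTop hθ.1).eventually_ge_atTop 1,
    eventually_gt_atTop 0] with n hθn hn
  have hn' : (0 : ℝ) < n := Nat.cast_pos.mpr hn
  exact ⟨Nat.floor_pos.mpr hθn,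
    (Nat.floor_lt (by positivity)).mpr (mul_lt_of_lt_one_left hn' hθ.2)⟩

section Bernoulli

variable {δ α : ℝ} {m n : ℕ} [NeZero m] {G : Fin m → (Fin n → Bool) → ℕ}

lemma one_div_mul_logb_minGuessMoment_bernDist_le (h0 : 0 < δ) (h1 : δ < 1) (hα : 0 ≤ α)
    (hn : 0 < n) (hG : ∀ i, IsGuessingFunction (bernDist δ n) (G i)) :
    1 / (n : ℝ) * logb 2 (minGuessMoment (bernDist δ n) G α) ≤
      (α + m) * logb 2 (δ ^ ((m : ℝ) / (α + m)) + (1 - δ) ^ ((m : ℝ) / (α + m))) := by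
  set c := δ ^ ((m : ℝ) / (α + m)) + (1 - δ) ^ ((m : ℝ) / (α + m))
  have hc : 0 < c := by
    have := Real.rpow_pos_of_pos h0 ((m : ℝ) / (α + m))
    have := Real.rpow_pos_of_pos (sub_pos.mpr h1) ((m : ℝ) / (α + m))
    positivity
  have hbound := minGuessMoment_le (bernDist_pos h0 h1) hG hα
  rw [sum_bernDist_rpow h0.le h1.le] at hbound
  have hlog := Real.logb_le_logb_of_le one_lt_two
    (minGuessMoment_pos (bernDist_pos h0 h1) fun i => (hG i).one_le) hbound
  rw [Real.logb_rpow_eq_mul_logb_of_pos (pow_pos hc n), Real.logb_pow] at hlog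
  calc 1 / (n : ℝ) * logb 2 (minGuessMoment (bernDist δ n) G α)
      ≤ 1 / (n : ℝ) * ((α + m) * (n * logb 2 c)) := by gcongr
    _ = (α + m) * logb 2 c := by field_simp

lemma le_one_div_mul_logb_minGuessMoment_bernDist (h0 : 0 < δ) (h1 : δ < 1) (hα : 0 ≤ α)
    (hG : ∀ i, IsGuessingFunction (bernDist δ n) (G i)) {k : ℕ} (hk0 : 0 < k) (hkn : k < n) :
    lowerExponent α m δ (k / n) - (α + m) * ((logb 2 (n + 1) + 1) / n) ≤
      1 / (n : ℝ) * logb 2 (minGuessMoment (bernDist δ n) G α) := by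
  have hn : (0 : ℝ) < n := by exact_mod_cast hk0.trans hkn
  have hC : (0 : ℝ) < n.choose k := by exact_mod_cast Nat.choose_pos hkn.le
  have hp : 0 < δ ^ k * (1 - δ) ^ (n - k) := by have := sub_pos.mpr h1; positivity
  have hbound := half_card_rpow_mul_pow_le_minGuessMoment (fun x => (bernDist_pos h0 h1 x).le)
    (fun i => (hG i).1) (fun i => (hG i).one_le) hα {x | weight x = k} hp.le
    fun x hx => by rw [bernDist_eq_pow_weight, (mem_filter.mp hx).2]
  rw [card_weight_eq] at hbound
  have hlog := Real.logb_le_logb_of_le one_lt_two (by positivity) hbound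
  rw [Real.logb_mul (by positivity) (by positivity),
    Real.logb_rpow_eq_mul_logb_of_pos (by positivity), Real.logb_div hC.ne' two_ne_zero,
    Real.logb_self_eq_one one_lt_two, Real.logb_pow, Real.logb_mul (by positivity) (by positivity),
    Real.logb_pow, Real.logb_pow, Nat.cast_sub hkn.le] at hlog
  have hentropy := mul_le_mul_of_nonneg_left
    (by linarith [logb_choose_ge hk0 hkn] :
      n * binEnt (k / n) - logb 2 (n + 1) - 1 ≤ logb 2 (n.choose k) - 1)
    (by positivity : 0 ≤ α + m)
  have hscaled : n * (lowerExponent α m δ (k / n) - (α + m) * ((logb 2 (n + 1) + 1) / n)) =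
      (α + m) * (n * binEnt (k / n) - logb 2 (n + 1) - 1) +
        m * (k * logb 2 δ + (n - k) * logb 2 (1 - δ)) := by
    rw [lowerExponent]
    field_simp
    ring
  rw [one_div_mul_eq_div, le_div_iff₀' hn, hscaled]
  linarith

end Bernoulli

/-- Theorem 4 of the paper: the decentralized guesswork exponent of `m`
agents under BSC(`δ`) side information is `α·H_{m/(α+m)}(δ)` (stated for the equivalent
independent bit-flip strings `Z₍₁₎,…,Z₍ₘ₎`). -/
theorem decentralized_bsc_guesswork_exponent
    (δ : ℝ) (hδ : δ ∈ Set.Ioc (0 : ℝ) (1 / 2)) (α : ℝ) (hα : 0 < α)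
    (m : ℕ) (hm : 1 ≤ m)
    (G : Fin m → ∀ n, (Fin n → Bool) → ℕ)
    (hG : ∀ i n, IsGuessingFunction (bernDist δ n) (G i n)) :
    Tendsto
      (fun n : ℕ => (1 / (n : ℝ)) *
        Real.logb 2 (∑ z : Fin m → Fin n → Bool,
          (∏ i, bernDist δ n (z i)) * ((⨅ i, G i n (z i) : ℕ) : ℝ) ^ α))
      atTop (nhds (α * Hb ((m : ℝ) / (α + m)) δ)) := by
  obtain ⟨hδ0, hδhalf⟩ := hδ
  have hδ1 : δ < 1 := by linarith
  have : NeZero m := ⟨by omega⟩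
  have hαm : α + m ≠ 0 := by positivity
  set θ := tiltedParam δ (m / (α + m))
  have hθ := tiltedParam_mem_Ioo hδ0 hδ1 (m / (α + m))
  have hu : Tendsto (fun n : ℕ => (⌊θ * n⌋₊ : ℝ) / n) atTop (nhds θ) :=
    (tendsto_nat_floor_mul_div_atTop hθ.1.le).comp tendsto_natCast_atTop_atTop
  have hlower := ((continuous_lowerExponent α m δ |>.tendsto θ).comp hu).sub
    (tendsto_logb_succ_add_one_div.const_mul (α + m))
  rw [mul_zero, sub_zero, lowerExponent_tiltedParam hαm hδ0 hδ1] at hlower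
  rw [mul_Hb_eq hα.ne' hαm]
  refine tendsto_of_tendsto_of_tendsto_of_le_of_le' hlower tendsto_const_nhds ?_ ?_
  · filter_upwards [eventually_floor_mul_pos_and_lt hθ] with n ⟨hk0, hkn⟩
    exact le_one_div_mul_logb_minGuessMoment_bernDist hδ0 hδ1 hα.le (hG · n) hk0 hkn
  · filter_upwards [eventually_gt_atTop 0] with n hn
    exact one_div_mul_logb_minGuessMoment_bernDist_le hδ0 hδ1 hα.le hn (hG · n)
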